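/- arXiv:0805.0545 — 3 statements merged into one kernel-verified Lean document; each statement's English description precedes it below -/
import Mathlib

section
/- Let t ≥ 3 and let a_1 ≤ ... ≤ a_t and b_1 ≤ ... ≤ b_t be integers satisfying a_{i-1} > b_i for 2 ≤ i ≤ t and a_i ≥ b_{i+3} for 1 ≤ i ≤ t-3 (and a_1 ≥ b_t if t = 3). Set s = Σ a_j - Σ b_i. Then for all 1 ≤ i ≤ t, 1 ≤ j < k ≤ t we have a_t - s + b_i - b_j - b_k < 0. -/
/-- with `t ≥ 3`, `a_1 ≤ ... ≤ a_t`, `b_1 ≤ ... ≤ b_t`,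
`a_{i-1} > b_i` for `2 ≤ i ≤ t`, `a_i ≥ b_{i+3}` for `1 ≤ i ≤ t-3`
(and `a_1 ≥ b_t` if `t = 3`), and `s = ∑ a - ∑ b`, one has
`a_t - s + b_i - b_j - b_k < 0` for all `i` and all `j < k`. -/
theorem stmt3 (t : ℕ) (ht : 3 ≤ t) (a b : Fin t → ℤ)
    (ha : Monotone a) (hb : Monotone b)
    (h1 : ∀ j : Fin t, ∀ h : (j : ℕ) + 1 < t, b ⟨(j : ℕ) + 1, h⟩ < a j)
    (h2 : ∀ i : Fin t, ∀ h : (i : ℕ) + 3 < t, b ⟨(i : ℕ) + 3, h⟩ ≤ a i)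
    (h3 : t = 3 → b ⟨t - 1, by omega⟩ ≤ a ⟨0, by omega⟩) :
    ∀ i j k : Fin t, j < k →
      a ⟨t - 1, by omega⟩ - (∑ x, a x - ∑ x, b x) + b i - b j - b k < 0 := by
  intro i j k hjk
  rcases eq_or_lt_of_le ht with h3t | h4t
  · -- t = 3
    subst h3t
    have hab1 : b 1 < a 0 := h1 0 (by norm_num)
    have hab2 : b 2 < a 1 := h1 1 (by norm_num)
    have hab3 : b 2 ≤ a 0 := h3 rfl
    have hb01 : b 0 ≤ b 1 := hb (by decide)
    have hb12 : b 1 ≤ b 2 := hb (by decide)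
    fin_cases i <;> fin_cases j <;> fin_cases k <;>
      simp_all [Fin.sum_univ_three] <;> linarith
  · -- 4 ≤ t
    have ht4 : 4 ≤ t := h4t
    set A : ℕ → ℤ := fun n => if h : n < t then a ⟨n, h⟩ else 0 with hA
    set B : ℕ → ℤ := fun n => if h : n < t then b ⟨n, h⟩ else 0 with hB
    have hAval : ∀ n (h : n < t), A n = a ⟨n, h⟩ := by intro n h; simp [hA, h]
    have hBval : ∀ n (h : n < t), B n = b ⟨n, h⟩ := by intro n h; simp [hB, h]
    have hAa : ∀ x : Fin t, A (x : ℕ) = a x := by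
      intro x; rw [hAval _ x.2]
    have hBb : ∀ x : Fin t, B (x : ℕ) = b x := by
      intro x; rw [hBval _ x.2]
    have hBmono : ∀ m n, m ≤ n → n < t → B m ≤ B n := by
      intro m n hmn hn
      rw [hBval m (lt_of_le_of_lt hmn hn), hBval n hn]
      exact hb (Fin.mk_le_mk.mpr hmn)
    have hAB1 : ∀ n, n + 1 < t → B (n + 1) < A n := by
      intro n h
      rw [hBval _ h, hAval n (by omega)]
      exact h1 ⟨n, by omega⟩ h
    have hAB3 : ∀ n, n + 3 < t → B (n + 3) ≤ A n := by
      intro n h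
      rw [hBval _ h, hAval n (by omega)]
      exact h2 ⟨n, by omega⟩ h
    have hsum_a : ∑ x : Fin t, a x = ∑ n ∈ Finset.range t, A n := by
      rw [← Fin.sum_univ_eq_sum_range]
      exact Finset.sum_congr rfl fun x _ => (hAa x).symm
    have hsum_b : ∑ x : Fin t, b x = ∑ n ∈ Finset.range t, B n := by
      rw [← Fin.sum_univ_eq_sum_range]
      exact Finset.sum_congr rfl fun x _ => (hBb x).symm
    have split_a2 : ∑ n ∈ Finset.range t, A n
        = ∑ n ∈ Finset.range (t - 1), A n + A (t - 1) := by
      conv_lhs => rw [show t = (t - 1) + 1 from by omega]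
      rw [Finset.sum_range_succ]
    have split_a : ∑ n ∈ Finset.range (t - 1), A n
        = ∑ n ∈ Finset.range (t - 3), A n + A (t - 3) + A (t - 2) := by
      conv_lhs => rw [show t - 1 = (t - 3) + 1 + 1 from by omega]
      rw [Finset.sum_range_succ, Finset.sum_range_succ,
        show t - 3 + 1 = t - 2 from by omega]
    have split_b : ∑ n ∈ Finset.range t, B n
        = (B 0 + B 1 + B 2) + ∑ n ∈ Finset.range (t - 3), B (3 + n) := by
      conv_lhs => rw [show t = 3 + (t - 3) from by omega]
      rw [Finset.sum_range_add]
      congr 1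
      simp [Finset.sum_range_succ]
    have hstep : ∑ n ∈ Finset.range (t - 3), B (3 + n)
        ≤ ∑ n ∈ Finset.range (t - 3), A n := by
      refine Finset.sum_le_sum fun n hn => ?_
      have hn' : n < t - 3 := Finset.mem_range.mp hn
      rw [show 3 + n = n + 3 from by omega]
      exact hAB3 n (by omega)
    have hstep1 : B (t - 2) < A (t - 3) := by
      have := hAB1 (t - 3) (by omega)
      rwa [show t - 3 + 1 = t - 2 from by omega] at this
    have hstep2 : B (t - 1) < A (t - 2) := by
      have := hAB1 (t - 2) (by omega)
      rwa [show t - 2 + 1 = t - 1 from by omega] at this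
    have hk1 : 1 ≤ (k : ℕ) := by
      have : (j : ℕ) < (k : ℕ) := hjk
      omega
    have m1 : B 0 ≤ B (j : ℕ) := hBmono 0 j (by omega) j.2
    have m2 : B 1 ≤ B (k : ℕ) := hBmono 1 k hk1 k.2
    have m3 : B 2 ≤ B (t - 2) := hBmono 2 (t - 2) (by omega) (by omega)
    have m4 : B (i : ℕ) ≤ B (t - 1) := hBmono i (t - 1) (by have := i.2; omega) (by omega)
    have e1 : A (t - 1) = a ⟨t - 1, by omega⟩ := hAval _ (by omega)
    have e2 : B (i : ℕ) = b i := hBb i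
    have e3 : B (j : ℕ) = b j := hBb j
    have e4 : B (k : ℕ) = b k := hBb k
    linarith
end

section
/- Let φ: F → G be the map of graded free R-modules given by a t×t homogeneous matrix A, and let φ_t: F → G_t be given by the matrix N obtained by deleting the last row. With B = R/I_{t-1}(N), there is an exact sequence R(-s) --(·det φ)--> I_B → coker(φ*)(a_t - s) → 0, where s = deg det(A); consequently coker(φ*)(a_t) ≅ I_B(s)/(det φ). -/
open MvPolynomial

/-- Homogeneity of integer degree `d` (zero if `d < 0`). -/
def IsHomogZ {σ : Type*} {k : Type*} [CommSemiring k]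
    (p : MvPolynomial σ k) (d : ℤ) : Prop :=
  if 0 ≤ d then p.IsHomogeneous d.toNat else p = 0

set_option maxHeartbeats 1000000

/-- with `φ : F → G` given by the square homogeneous matrix `A`
and `I_B = I_t(N)` the ideal of maximal minors of the matrix `N` of the first
`t` rows of `A` (with Hilbert–Burch resolution `0 → G_t* → F* → I_B → 0`),
there is an exact sequence `R(-s) --·det φ--> I_B → coker(φ*)(a_t - s) → 0`;
consequently `coker(φ*)(a_t) ≅ I_B(s)/(det φ)`.  (Twists are suppressed; the
exactness is expressed by a surjection `I_B → coker(φ*)` whose kernel is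
generated by `det A`.) -/
theorem stmt11 (k : Type*) [Field k] (n t : ℕ)
    (a b : Fin (t + 1) → ℤ)
    (A : Matrix (Fin (t + 1)) (Fin (t + 1)) (MvPolynomial (Fin (n + 1)) k))
    (hA : ∀ j i, IsHomogZ (A j i) (a j - b i))
    (IB : Ideal (MvPolynomial (Fin (n + 1)) k))
    (hIB : IB = Ideal.span
      {d | ∃ c : Fin (t + 1),
        d = ((A.submatrix (Fin.castSucc : Fin t → Fin (t + 1)) c.succAbove)).det})
    (β : (Fin (t + 1) → MvPolynomial (Fin (n + 1)) k) →ₗ[MvPolynomial (Fin (n + 1)) k]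
        MvPolynomial (Fin (n + 1)) k)
    (hβ : β = ∑ c : Fin (t + 1), (LinearMap.proj c).smulRight
      ((-1 : MvPolynomial (Fin (n + 1)) k) ^ (c : ℕ) *
        ((A.submatrix (Fin.castSucc : Fin t → Fin (t + 1)) c.succAbove)).det))
    (hinj : Function.Injective
      ((A.submatrix (Fin.castSucc : Fin t → Fin (t + 1)) id).transpose).mulVecLin)
    (hex : Function.Exact
      ((A.submatrix (Fin.castSucc : Fin t → Fin (t + 1)) id).transpose).mulVecLin β)
    (hrange : LinearMap.range β = IB.restrictScalars _) :
    ∃ ψ : ↥IB →ₗ[MvPolynomial (Fin (n + 1)) k]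
        ((Fin (t + 1) → MvPolynomial (Fin (n + 1)) k) ⧸
          LinearMap.range A.transpose.mulVecLin),
      Function.Surjective ψ ∧
      LinearMap.ker ψ = Submodule.span (MvPolynomial (Fin (n + 1)) k)
        {x : ↥IB | (x : MvPolynomial (Fin (n + 1)) k) = A.det} ∧
      Nonempty
        (((Fin (t + 1) → MvPolynomial (Fin (n + 1)) k) ⧸
            LinearMap.range A.transpose.mulVecLin) ≃ₗ[MvPolynomial (Fin (n + 1)) k]
          (↥IB ⧸ Submodule.span (MvPolynomial (Fin (n + 1)) k)
            {x : ↥IB | (x : MvPolynomial (Fin (n + 1)) k) = A.det})) := by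
  classical
  set q : Submodule (MvPolynomial (Fin (n + 1)) k) (Fin (t + 1) → (MvPolynomial (Fin (n + 1)) k)) := LinearMap.range A.transpose.mulVecLin with hq
  -- β lands in IB
  have hmemβ : ∀ v, β v ∈ IB := by
    intro v
    have : β v ∈ LinearMap.range β := ⟨v, rfl⟩
    rw [hrange] at this
    exact this
  set βr : (Fin (t + 1) → (MvPolynomial (Fin (n + 1)) k)) →ₗ[(MvPolynomial (Fin (n + 1)) k)] ↥IB :=
    β.codRestrict (Submodule.restrictScalars (MvPolynomial (Fin (n + 1)) k) IB) hmemβ with hβr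
  have hβr_apply : ∀ v, (βr v : (MvPolynomial (Fin (n + 1)) k)) = β v := fun v => rfl
  have hβr_surj : Function.Surjective βr := by
    rintro ⟨y, hy⟩
    have : y ∈ LinearMap.range β := by rw [hrange]; exact hy
    obtain ⟨v, hv⟩ := this
    exact ⟨v, Subtype.ext hv⟩
  -- kernel of βr is contained in q
  have hsnoc : ∀ w : Fin t → (MvPolynomial (Fin (n + 1)) k),
      ((A.submatrix (Fin.castSucc : Fin t → Fin (t + 1)) id).transpose).mulVecLin w
        = A.transpose.mulVecLin (Fin.snoc w 0) := by
    intro w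
    funext i
    simp only [Matrix.mulVecLin_apply, Matrix.mulVec, dotProduct,
      Matrix.transpose_apply, Matrix.submatrix_apply, id_eq]
    rw [Fin.sum_univ_castSucc]
    simp [Fin.snoc_castSucc, Fin.snoc_last]
  have hker_le : LinearMap.ker βr ≤ q := by
    intro v hv
    have hv0 : β v = 0 := by
      have := (LinearMap.mem_ker).1 hv
      have : (βr v : (MvPolynomial (Fin (n + 1)) k)) = 0 := by rw [this]; rfl
      simpa [hβr_apply] using this
    obtain ⟨w, hw⟩ := (hex v).1 hv0
    refine ⟨Fin.snoc w 0, ?_⟩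
    rw [← hsnoc w, hw]
  -- the key determinant computation
  have h1 : ((-1 : (MvPolynomial (Fin (n + 1)) k)) ^ t) * ((-1 : (MvPolynomial (Fin (n + 1)) k)) ^ t) = 1 := by
    rw [← pow_add, ← two_mul, pow_mul, neg_one_sq, one_pow]
  have hkey : ∀ w : Fin (t + 1) → (MvPolynomial (Fin (n + 1)) k),
      β (A.transpose.mulVecLin w) = (-1 : (MvPolynomial (Fin (n + 1)) k)) ^ t * (w (Fin.last t) * A.det) := by
    intro w
    rw [hβ]
    simp only [LinearMap.sum_apply, LinearMap.smulRight_apply, LinearMap.proj_apply,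
      smul_eq_mul, Matrix.mulVecLin_apply]
    have hadj : ∀ c : Fin (t + 1), ((-1 : (MvPolynomial (Fin (n + 1)) k)) ^ (c : ℕ) *
        (A.submatrix (Fin.castSucc : Fin t → Fin (t + 1)) c.succAbove).det)
        = (-1) ^ t * Matrix.adjugate A c (Fin.last t) := by
      intro c
      rw [Matrix.adjugate_fin_succ_eq_det_submatrix, Fin.succAbove_last]
      rw [Fin.val_last, pow_add]
      ring_nf
      rw [mul_comm t 2, pow_mul, neg_one_sq, one_pow, mul_one]
    simp_rw [hadj]
    calc ∑ c : Fin (t + 1),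
          A.transpose.mulVec w c * ((-1 : (MvPolynomial (Fin (n + 1)) k)) ^ t * Matrix.adjugate A c (Fin.last t))
        = (-1 : (MvPolynomial (Fin (n + 1)) k)) ^ t * ∑ j, w j * ∑ c, A j c * Matrix.adjugate A c (Fin.last t) := by
          simp_rw [Matrix.mulVec, dotProduct, Matrix.transpose_apply,
            Finset.sum_mul, Finset.mul_sum]
          rw [Finset.sum_comm]
          refine Finset.sum_congr rfl fun j _ => Finset.sum_congr rfl fun c _ => by ring
      _ = (-1 : (MvPolynomial (Fin (n + 1)) k)) ^ t * (w (Fin.last t) * A.det) := by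
          congr 1
          have h : ∀ j, ∑ c, A j c * Matrix.adjugate A c (Fin.last t)
              = (A * Matrix.adjugate A) j (Fin.last t) := by
            intro j; rw [Matrix.mul_apply]
          simp_rw [h, Matrix.mul_adjugate, Matrix.smul_apply, Matrix.one_apply, smul_eq_mul]
          rw [Fintype.sum_eq_single (Fin.last t)]
          · simp
          · intro j hj; simp [hj]
  -- det A ∈ IB
  set u0 : Fin (t + 1) → (MvPolynomial (Fin (n + 1)) k) := A.transpose.mulVecLin (Pi.single (Fin.last t) ((-1 : (MvPolynomial (Fin (n + 1)) k)) ^ t))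
    with hu0
  have hβu0 : β u0 = A.det := by
    rw [hu0, hkey]
    simp only [Pi.single_eq_same]
    rw [← mul_assoc, h1, one_mul]
  have hdet_mem : A.det ∈ IB := by rw [← hβu0]; exact hmemβ u0
  set d : ↥IB := ⟨A.det, hdet_mem⟩ with hd
  have hset : {x : ↥IB | (x : (MvPolynomial (Fin (n + 1)) k)) = A.det} = {d} := by
    ext y; simp [Set.mem_setOf_eq, hd, Subtype.ext_iff]
  -- construct ψ
  set e := βr.quotKerEquivOfSurjective hβr_surj with he_def
  have he : ∀ u, e (Submodule.Quotient.mk u) = βr u := by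
    intro u
    simp [he_def, LinearMap.quotKerEquivOfSurjective, LinearMap.quotKerEquivRange_apply_mk]
  set π : ((Fin (t + 1) → (MvPolynomial (Fin (n + 1)) k)) ⧸ LinearMap.ker βr) →ₗ[(MvPolynomial (Fin (n + 1)) k)] ((Fin (t + 1) → (MvPolynomial (Fin (n + 1)) k)) ⧸ q) :=
    Submodule.liftQ (LinearMap.ker βr) q.mkQ
      (by rw [Submodule.ker_mkQ]; exact hker_le) with hπ
  set ψ : ↥IB →ₗ[(MvPolynomial (Fin (n + 1)) k)] ((Fin (t + 1) → (MvPolynomial (Fin (n + 1)) k)) ⧸ q) := π ∘ₗ (e.symm : ↥IB →ₗ[(MvPolynomial (Fin (n + 1)) k)] _) with hψ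
  have hψ_apply : ∀ u, ψ (βr u) = Submodule.Quotient.mk u := by
    intro u
    have hsymm : e.symm (βr u) = Submodule.Quotient.mk u := by
      rw [LinearEquiv.symm_apply_eq, he]
    simp [hψ, hsymm, hπ, Submodule.liftQ_apply, Submodule.mkQ_apply]
  have hsurj : Function.Surjective ψ := by
    intro z
    obtain ⟨u, rfl⟩ := Submodule.Quotient.mk_surjective q z
    exact ⟨βr u, hψ_apply u⟩
  have hker : LinearMap.ker ψ = Submodule.span (MvPolynomial (Fin (n + 1)) k) {x : ↥IB | (x : (MvPolynomial (Fin (n + 1)) k)) = A.det} := by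
    rw [hset]
    apply le_antisymm
    · intro x hx
      obtain ⟨u, hu⟩ := Submodule.Quotient.mk_surjective (LinearMap.ker βr) (e.symm x)
      have hxu : βr u = x := by rw [← he, hu, LinearEquiv.apply_symm_apply]
      have hψx : ψ x = 0 := hx
      have : Submodule.Quotient.mk u = (0 : (Fin (t + 1) → (MvPolynomial (Fin (n + 1)) k)) ⧸ q) := by
        rw [← hψ_apply u, hxu]; exact hψx
      have huq : u ∈ q := (Submodule.Quotient.mk_eq_zero q).1 this
      obtain ⟨w, hw⟩ := huq
      have hxval : (x : (MvPolynomial (Fin (n + 1)) k)) = (-1 : (MvPolynomial (Fin (n + 1)) k)) ^ t * (w (Fin.last t) * A.det) := by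
        rw [← hxu, hβr_apply, ← hw, hkey]
      rw [Submodule.mem_span_singleton]
      refine ⟨(-1 : (MvPolynomial (Fin (n + 1)) k)) ^ t * w (Fin.last t), Subtype.ext ?_⟩
      simp only [Submodule.coe_smul, smul_eq_mul, hd]
      rw [hxval]; ring
    · rw [Submodule.span_le]
      rintro y rfl
      have hdu : βr u0 = d := Subtype.ext (by rw [hβr_apply, hβu0])
      have : ψ d = 0 := by
        rw [← hdu, hψ_apply]
        exact (Submodule.Quotient.mk_eq_zero q).2 ⟨_, rfl⟩
      exact this
  refine ⟨ψ, hsurj, hker, ?_⟩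
  rw [← hker]
  exact ⟨(ψ.quotKerEquivOfSurjective hsurj).symm⟩
end

section
/- Let B be a codimension 2 CM graded quotient of R with Hilbert-Burch resolution 0 → F_2 → F_1 → R → B → 0 where rank F_1 = μ and rank F_2 = μ - 1. Then the normal module N_B = Hom_R(I_B, B) fits in an exact sequence 0 → R → ⊕_i I_B(n_{1,i}) → ⊕_j I_B(n_{2,j}) → N_B → 0, obtained by applying Hom_R(-, I_B) to the resolution and using Ext¹_R(I_B, I_B) ≅ N_B. -/
/-!
Write `F₂ = R^κ →[M] F₁ = R^ι →[v] I` for the Hilbert–Burch resolution, so `I` is generated by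
the `v i`. Applying `Hom(-, I)` gives `I^ι → I^κ`, `x ↦ x ᵥ* M`, and `R = Hom(I, I)` maps into
`I^ι` by `r ↦ r • v`. Exactness at `I^ι` says that the kernel of `x ↦ x ᵥ* M` on `R^ι` is `R • v`:
any such `x` pairs to zero against the syzygies of `v`, so all `2 × 2` minors of `(x, v)` vanish,
and since `I` has height two the `v i` have no common non-unit factor in the factorial ring `R`.
The cokernel `Ext¹(I, I)` is identified with `Hom(I, R/I)` by the connecting map: lift `y ∈ I^κ`
to `z ∈ R^ι` with `z ᵥ* M = y` (possible since `I` kills the cokernel of `ᵥ* M`), and send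
`a = w ⬝ᵥ v` to `z ⬝ᵥ w mod I`.
-/

open MvPolynomial

/-- The codimension (height) of an ideal. -/
noncomputable def idealCodim {R : Type*} [CommRing R] (I : Ideal R) : ℕ∞ :=
  ⨅ (P : PrimeSpectrum R) (_ : P.asIdeal ∈ I.minimalPrimes), Order.height P

open Matrix

lemma idealCodim_eq_height {R : Type*} [CommRing R] (I : Ideal R) :
    idealCodim I = I.height := by
  rw [Ideal.height_eq_inf_minimalPrimes, idealCodim]
  refine le_antisymm (le_iInf₂ fun J hJ => ?_) (le_iInf₂ fun P hP => ?_)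
  · have := iInf₂_le (f := fun (P : PrimeSpectrum R) (_ : P.asIdeal ∈ I.minimalPrimes) =>
      Order.height P) ⟨J, hJ.1.1⟩ hJ
    rwa [← PrimeSpectrum.height_eq_orderHeight] at this
  · rw [← PrimeSpectrum.height_eq_orderHeight]
    exact iInf₂_le (f := fun (J : Ideal R) (_ : J ∈ I.minimalPrimes) => J.height) P.asIdeal hP

lemma isUnit_of_le_span_singleton {R : Type*} [CommRing R] [IsNoetherianRing R] {I : Ideal R}
    (hI : 2 ≤ I.height) {q : R} (hq : I ≤ Ideal.span {q}) : IsUnit q := by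
  by_contra hq'
  obtain ⟨P, hP⟩ := Ideal.nonempty_minimalPrimes (I := Ideal.span {q}) (by
    rwa [Ne, Ideal.span_singleton_eq_top])
  have hP1 : P.height ≤ 1 := Ideal.height_le_one_of_isPrincipal_of_mem_minimalPrimes _ P hP
  have hIP : I.height ≤ P.height := Ideal.height_mono (hq.trans hP.1.2)
  exact absurd (hI.trans (hIP.trans hP1)) (by decide)

lemma exists_eq_smul_of_mul_eq_mul {R ι : Type*} [CommRing R] [IsDomain R]
    [UniqueFactorizationMonoid R] {v x : ι → R} (hv : ∀ q, (∀ i, q ∣ v i) → IsUnit q)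
    (h : ∀ i j, x i * v j = x j * v i) : ∃ r : R, x = r • v := by
  obtain ⟨i₀, hi₀⟩ : ∃ i, v i ≠ 0 := by
    by_contra! hzero
    exact not_isUnit_zero (hv 0 fun i => (hzero i).symm ▸ dvd_rfl)
  obtain ⟨p, q, c, hpq, hp, hq⟩ :=
    UniqueFactorizationMonoid.exists_reduced_factors' (x i₀) (v i₀) hi₀
  have hc : c ≠ 0 := by rintro rfl; exact hi₀ (by rw [← hq, zero_mul])
  have hqx (j : ι) : q * x j = p * v j := mul_left_cancel₀ hc <| by
    linear_combination x j * hq - v j * hp - h i₀ j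
  obtain ⟨u, rfl⟩ := hv q fun j => hpq.symm.dvd_of_dvd_mul_left ⟨x j, (hqx j).symm⟩
  exact ⟨↑u⁻¹ * p, funext fun j => by simp [mul_assoc, ← hqx j]⟩

namespace HilbertBurch

variable {R : Type*} [CommRing R] {ι κ : Type*} {M : Matrix ι κ R} {v : ι → R} {I : Ideal R}

lemma mem_of_span_range_eq (hI : Ideal.span (Set.range v) = I) (i : ι) : v i ∈ I :=
  hI ▸ Ideal.subset_span ⟨i, rfl⟩

def generatorsMap (hI : Ideal.span (Set.range v) = I) : R →ₗ[R] (ι → I) :=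
  LinearMap.pi fun i => LinearMap.toSpanSingleton R I ⟨v i, mem_of_span_range_eq hI i⟩

lemma coe_generatorsMap_apply (hI : Ideal.span (Set.range v) = I) (r : R) (i : ι) :
    (generatorsMap hI r i : R) = r * v i := rfl

lemma generatorsMap_injective [IsDomain R] (hI : Ideal.span (Set.range v) = I) (hI0 : I ≠ ⊥) :
    Function.Injective (generatorsMap hI) := by
  refine (injective_iff_map_eq_zero _).2 fun r hr => by_contra fun hr0 => hI0 ?_
  refine hI ▸ Ideal.span_eq_bot.2 ?_
  rintro _ ⟨i, rfl⟩
  have : r * v i = 0 := by rw [← coe_generatorsMap_apply hI, hr]; rfl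
  exact (mul_eq_zero.1 this).resolve_left hr0

variable [Fintype ι]

def transposeMap (M : Matrix ι κ R) (I : Ideal R) : (ι → I) →ₗ[R] (κ → I) :=
  LinearMap.pi fun j => ∑ i, M i j • LinearMap.proj i

lemma coe_transposeMap_apply (x : ι → I) (j : κ) :
    (transposeMap M I x j : R) = ((fun i => (x i : R)) ᵥ* M) j := by
  simp [transposeMap, vecMul, dotProduct, mul_comm]

lemma dotProduct_mem_of_mem {x : ι → R} (hx : ∀ i, x i ∈ I) (y : ι → R) : x ⬝ᵥ y ∈ I :=
  Ideal.sum_mem _ fun i _ => I.mul_mem_right _ (hx i)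

lemma exists_dotProduct_eq (hI : Ideal.span (Set.range v) = I) {a : R} (ha : a ∈ I) :
    ∃ w, w ⬝ᵥ v = a :=
  Ideal.mem_span_range_iff_exists_fun.1 (hI ▸ ha)

lemma dotProduct_mem (hI : Ideal.span (Set.range v) = I) (w : ι → R) : w ⬝ᵥ v ∈ I :=
  hI ▸ Ideal.mem_span_range_iff_exists_fun.2 ⟨w, rfl⟩

variable [Fintype κ]

lemma exists_mulVec_eq (hex : Function.Exact M.mulVecLin (Fintype.linearCombination R v))
    {w : ι → R} (hw : w ⬝ᵥ v = 0) : ∃ u, M *ᵥ u = w :=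
  (hex w).1 hw

lemma vecMul_eq_zero (hex : Function.Exact M.mulVecLin (Fintype.linearCombination R v)) :
    v ᵥ* M = 0 := by
  refine dotProduct_eq_zero _ fun u => ?_
  rw [← dotProduct_mulVec, dotProduct_comm]
  exact hex.apply_apply_eq_zero u

lemma dotProduct_eq_zero_of_vecMul_eq_zero
    (hex : Function.Exact M.mulVecLin (Fintype.linearCombination R v)) {x w : ι → R}
    (hx : x ᵥ* M = 0) (hw : w ⬝ᵥ v = 0) : x ⬝ᵥ w = 0 := by
  obtain ⟨u, rfl⟩ := exists_mulVec_eq hex hw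
  rw [dotProduct_mulVec, hx, zero_dotProduct]

variable [DecidableEq ι]

lemma mul_eq_mul_of_vecMul_eq_zero
    (hex : Function.Exact M.mulVecLin (Fintype.linearCombination R v)) {x : ι → R}
    (hx : x ᵥ* M = 0) (i j : ι) : x i * v j = x j * v i := by
  have := dotProduct_eq_zero_of_vecMul_eq_zero hex hx
    (w := Pi.single i (v j) - Pi.single j (v i)) (by simp [sub_dotProduct, mul_comm])
  simpa [dotProduct_sub, sub_eq_zero] using this

lemma exists_eq_smul_of_vecMul_eq_zero [IsDomain R] [UniqueFactorizationMonoid R]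
    [IsNoetherianRing R] (hex : Function.Exact M.mulVecLin (Fintype.linearCombination R v))
    (hI : Ideal.span (Set.range v) = I) (hI2 : 2 ≤ I.height) {x : ι → R} (hx : x ᵥ* M = 0) :
    ∃ r : R, x = r • v :=
  exists_eq_smul_of_mul_eq_mul
    (fun _ hq => isUnit_of_le_span_singleton hI2 <| hI ▸ Ideal.span_le.2 <| by
      rintro _ ⟨i, rfl⟩
      exact Ideal.mem_span_singleton.2 (hq i))
    (mul_eq_mul_of_vecMul_eq_zero hex hx)

theorem exact_generatorsMap_transposeMap [IsDomain R] [UniqueFactorizationMonoid R]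
    [IsNoetherianRing R] (hex : Function.Exact M.mulVecLin (Fintype.linearCombination R v))
    (hI : Ideal.span (Set.range v) = I) (hI2 : 2 ≤ I.height) :
    Function.Exact (generatorsMap hI) (transposeMap M I) := by
  intro x
  constructor
  · intro hx
    obtain ⟨r, hr⟩ := exists_eq_smul_of_vecMul_eq_zero hex hI hI2 (x := fun i => (x i : R))
      (by ext j; rw [← coe_transposeMap_apply, hx]; rfl)
    exact ⟨r, funext fun i => Subtype.ext (congrFun hr i).symm⟩
  · rintro ⟨r, rfl⟩
    ext j
    have : (fun i => (generatorsMap hI r i : R)) = r • v := rfl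
    rw [coe_transposeMap_apply, this, smul_vecMul, vecMul_eq_zero hex, smul_zero]
    rfl

lemma mkQ_dotProduct_eq [IsDomain R] [UniqueFactorizationMonoid R] [IsNoetherianRing R]
    (hex : Function.Exact M.mulVecLin (Fintype.linearCombination R v))
    (hI : Ideal.span (Set.range v) = I) (hI2 : 2 ≤ I.height) {z z' w w' : ι → R}
    (hz : ∀ j, (z ᵥ* M) j ∈ I) (hzz : z ᵥ* M = z' ᵥ* M) (hww : w ⬝ᵥ v = w' ⬝ᵥ v) :
    I.mkQ (z ⬝ᵥ w) = I.mkQ (z' ⬝ᵥ w') := by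
  obtain ⟨r, hr⟩ := exists_eq_smul_of_vecMul_eq_zero hex hI hI2 (x := z - z')
    (by rw [sub_vecMul, hzz, sub_self])
  obtain ⟨u, hu⟩ := exists_mulVec_eq hex (w := w - w') (by rw [sub_dotProduct, hww, sub_self])
  have h₁ : (z - z') ⬝ᵥ w = r * (w ⬝ᵥ v) := by
    rw [hr, smul_dotProduct, smul_eq_mul, dotProduct_comm]
  have h₂ : z' ⬝ᵥ (w - w') = (z ᵥ* M) ⬝ᵥ u := by rw [← hu, dotProduct_mulVec, hzz]
  have : z ⬝ᵥ w - z' ⬝ᵥ w' = r * (w ⬝ᵥ v) + (z ᵥ* M) ⬝ᵥ u := by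
    rw [← h₁, ← h₂, sub_dotProduct, dotProduct_sub]
    ring
  rw [Submodule.mkQ_apply, Submodule.mkQ_apply, Submodule.Quotient.eq, this]
  exact I.add_mem (I.mul_mem_left _ (dotProduct_mem hI w)) (dotProduct_mem_of_mem hz u)

variable [DecidableEq κ]

/-- For `a = w ⬝ᵥ v`, exactness gives `S` with `M * S = a • 1 - vecMulVec w v`; then
`M * (S * M) = a • M`, so `S * M = a • 1`. -/
lemma exists_vecMul_eq_smul (hex : Function.Exact M.mulVecLin (Fintype.linearCombination R v))
    (hinj : Function.Injective M.mulVecLin) (hI : Ideal.span (Set.range v) = I) {a : R}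
    (ha : a ∈ I) (u : κ → R) : ∃ z, z ᵥ* M = a • u := by
  obtain ⟨w, rfl⟩ := exists_dotProduct_eq hI ha
  choose s hs using fun i => exists_mulVec_eq hex (w := Pi.single i (w ⬝ᵥ v) - v i • w)
    (by simp [sub_dotProduct, mul_comm])
  set S : Matrix κ ι R := (Matrix.of s)ᵀ
  have hMS : M * S = (w ⬝ᵥ v) • 1 - vecMulVec w v := by
    ext i' i
    have := congrFun (hs i) i'
    simp only [mulVec, dotProduct, Pi.sub_apply, Pi.smul_apply, smul_eq_mul] at this
    simp [S, mul_apply, this, Pi.single_apply, one_apply, vecMulVec_apply, mul_comm, dotProduct]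
  have hSM : S * M = (w ⬝ᵥ v) • (1 : Matrix κ κ R) := by
    have : M * (S * M) = M * ((w ⬝ᵥ v) • (1 : Matrix κ κ R)) := by
      rw [← Matrix.mul_assoc, hMS, Matrix.sub_mul, vecMulVec_mul, vecMul_eq_zero hex]
      ext
      simp [vecMulVec_apply]
    refine ext_of_mulVec_single fun j => hinj ?_
    simpa only [mulVecLin_apply, mulVec_mulVec] using congrArg (· *ᵥ Pi.single j 1) this
  exact ⟨u ᵥ* S, by rw [vecMul_vecMul, hSM, vecMul_smul, vecMul_one]⟩

lemma exists_vecMul_eq (hex : Function.Exact M.mulVecLin (Fintype.linearCombination R v))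
    (hinj : Function.Injective M.mulVecLin) (hI : Ideal.span (Set.range v) = I) {y : κ → R}
    (hy : ∀ j, y j ∈ I) : ∃ z, z ᵥ* M = y := by
  have : y ∈ LinearMap.range M.vecMulLinear := by
    rw [pi_eq_sum_univ y]
    exact Submodule.sum_mem _ fun j _ => exists_vecMul_eq_smul hex hinj hI (hy j) _
  exact this

variable [IsDomain R] [UniqueFactorizationMonoid R] [IsNoetherianRing R]
  (hex : Function.Exact M.mulVecLin (Fintype.linearCombination R v))
  (hinj : Function.Injective M.mulVecLin) (hI : Ideal.span (Set.range v) = I)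

noncomputable def connectingPairing (y : κ → I) (a : I) : R ⧸ I :=
  I.mkQ ((exists_vecMul_eq hex hinj hI fun j => (y j).2).choose ⬝ᵥ
    (exists_dotProduct_eq hI a.2).choose)

lemma connectingPairing_eq (hI2 : 2 ≤ I.height) {y : κ → I} {a : I} {z w : ι → R}
    (hz : z ᵥ* M = fun j => (y j : R)) (hw : w ⬝ᵥ v = a) :
    connectingPairing hex hinj hI y a = I.mkQ (z ⬝ᵥ w) := by
  have hz₀ := (exists_vecMul_eq hex hinj hI fun j => (y j).2).choose_spec
  have hw₀ := (exists_dotProduct_eq hI a.2).choose_spec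
  exact mkQ_dotProduct_eq hex hI hI2 (by rw [hz₀]; exact fun j => (y j).2) (by rw [hz₀, hz])
    (by rw [hw₀, hw])

noncomputable def connectingMap (hI2 : 2 ≤ I.height) : (κ → I) →ₗ[R] I →ₗ[R] R ⧸ I :=
  LinearMap.mk₂ R (connectingPairing hex hinj hI)
    (fun y y' a => by
      obtain ⟨z, hz⟩ := exists_vecMul_eq hex hinj hI fun j => (y j).2
      obtain ⟨z', hz'⟩ := exists_vecMul_eq hex hinj hI fun j => (y' j).2
      obtain ⟨w, hw⟩ := exists_dotProduct_eq hI a.2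
      rw [connectingPairing_eq hex hinj hI hI2 hz hw, connectingPairing_eq hex hinj hI hI2 hz' hw,
        connectingPairing_eq hex hinj hI hI2 (z := z + z') (by rw [add_vecMul, hz, hz']; rfl) hw,
        add_dotProduct, map_add])
    (fun c y a => by
      obtain ⟨z, hz⟩ := exists_vecMul_eq hex hinj hI fun j => (y j).2
      obtain ⟨w, hw⟩ := exists_dotProduct_eq hI a.2
      rw [connectingPairing_eq hex hinj hI hI2 hz hw,
        connectingPairing_eq hex hinj hI hI2 (z := c • z) (by rw [smul_vecMul, hz]; rfl) hw,
        smul_dotProduct, map_smul])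
    (fun y a a' => by
      obtain ⟨z, hz⟩ := exists_vecMul_eq hex hinj hI fun j => (y j).2
      obtain ⟨w, hw⟩ := exists_dotProduct_eq hI a.2
      obtain ⟨w', hw'⟩ := exists_dotProduct_eq hI a'.2
      rw [connectingPairing_eq hex hinj hI hI2 hz hw, connectingPairing_eq hex hinj hI hI2 hz hw',
        connectingPairing_eq hex hinj hI hI2 (w := w + w') hz
          (by rw [add_dotProduct, hw, hw']; rfl),
        dotProduct_add, map_add])
    (fun c y a => by
      obtain ⟨z, hz⟩ := exists_vecMul_eq hex hinj hI fun j => (y j).2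
      obtain ⟨w, hw⟩ := exists_dotProduct_eq hI a.2
      rw [connectingPairing_eq hex hinj hI hI2 hz hw,
        connectingPairing_eq hex hinj hI hI2 (w := c • w) hz (by rw [smul_dotProduct, hw]; rfl),
        dotProduct_smul, map_smul])

lemma connectingMap_apply_eq (hI2 : 2 ≤ I.height) {y : κ → I} {a : I} {z w : ι → R}
    (hz : z ᵥ* M = fun j => (y j : R)) (hw : w ⬝ᵥ v = a) :
    connectingMap hex hinj hI hI2 y a = I.mkQ (z ⬝ᵥ w) :=
  connectingPairing_eq hex hinj hI hI2 hz hw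

theorem exact_transposeMap_connectingMap (hI2 : 2 ≤ I.height) :
    Function.Exact (transposeMap M I) (connectingMap hex hinj hI hI2) := by
  intro y
  obtain ⟨z, hz⟩ := exists_vecMul_eq hex hinj hI fun j => (y j).2
  constructor
  · intro hy
    have hzI (i : ι) : z i ∈ I := by
      have := LinearMap.congr_fun hy ⟨v i, mem_of_span_range_eq hI i⟩
      rw [connectingMap_apply_eq hex hinj hI hI2 hz (w := Pi.single i 1) (by simp)] at this
      simpa [Ideal.Quotient.eq_zero_iff_mem] using this
    refine ⟨fun i => ⟨z i, hzI i⟩, funext fun j => Subtype.ext ?_⟩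
    rw [coe_transposeMap_apply]
    exact congrFun hz j
  · rintro ⟨x, rfl⟩
    ext a
    obtain ⟨w, hw⟩ := exists_dotProduct_eq hI a.2
    have hx : (fun i => (x i : R)) ᵥ* M = fun j => (transposeMap M I x j : R) := by
      ext j
      exact (coe_transposeMap_apply x j).symm
    rw [connectingMap_apply_eq hex hinj hI hI2 hx hw, LinearMap.zero_apply,
      Submodule.mkQ_apply, Submodule.Quotient.mk_eq_zero]
    exact dotProduct_mem_of_mem (fun i => (x i).2) w

theorem connectingMap_surjective (hI2 : 2 ≤ I.height) :
    Function.Surjective (connectingMap hex hinj hI hI2) := by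
  intro φ
  choose c hc using fun i => I.mkQ_surjective (φ ⟨v i, mem_of_span_range_eq hI i⟩)
  have hφ (a : I) (w : ι → R) (hw : w ⬝ᵥ v = a) : φ a = I.mkQ (c ⬝ᵥ w) := by
    have : a = ∑ i, w i • ⟨v i, mem_of_span_range_eq hI i⟩ := Subtype.ext <| by
      simp [← hw, dotProduct]
    rw [this, map_sum, dotProduct, map_sum]
    refine Finset.sum_congr rfl fun i _ => ?_
    rw [map_smul, ← hc, ← map_smul, smul_eq_mul, mul_comm]
  have hcI (j : κ) : (c ᵥ* M) j ∈ I := by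
    have := hφ 0 (M *ᵥ Pi.single j 1) (hex.apply_apply_eq_zero _)
    rwa [map_zero, eq_comm, Submodule.mkQ_apply, Submodule.Quotient.mk_eq_zero, dotProduct_mulVec,
      dotProduct_single, mul_one] at this
  refine ⟨fun j => ⟨(c ᵥ* M) j, hcI j⟩, LinearMap.ext fun a => ?_⟩
  obtain ⟨w, hw⟩ := exists_dotProduct_eq hI a.2
  rw [connectingMap_apply_eq hex hinj hI hI2 rfl hw, hφ a w hw]

end HilbertBurch

open HilbertBurch in
/-- let `B = R/I_B` be a codimension 2 Cohen–Macaulay graded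
quotient with Hilbert–Burch resolution `0 → F₂ → F₁ → R → B → 0`,
`rank F₁ = μ = m + 1`, `rank F₂ = m`.  Then the normal module
`N_B = Hom_R(I_B, B)` fits in an exact sequence
`0 → R → ⊕ᵢ I_B(n₁ᵢ) → ⊕ⱼ I_B(n₂ⱼ) → N_B → 0` (twists suppressed), obtained
by applying `Hom_R(-, I_B)` to the resolution and using
`Ext¹_R(I_B, I_B) ≅ N_B`. -/
theorem stmt19 (k : Type*) [Field k] (n m : ℕ)
    (I : Ideal (MvPolynomial (Fin (n + 1)) k))
    (M2 : Matrix (Fin (m + 1)) (Fin m) (MvPolynomial (Fin (n + 1)) k))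
    (v1 : Fin (m + 1) → MvPolynomial (Fin (n + 1)) k)
    (d1 : (Fin (m + 1) → MvPolynomial (Fin (n + 1)) k) →ₗ[MvPolynomial (Fin (n + 1)) k]
        MvPolynomial (Fin (n + 1)) k)
    (hd1 : d1 = ∑ i, (LinearMap.proj i).smulRight (v1 i))
    (hinj : Function.Injective M2.mulVecLin)
    (hex : Function.Exact M2.mulVecLin d1)
    (hrange : LinearMap.range d1 = I.restrictScalars _)
    (hcodim : idealCodim I = 2) :
    ∃ (α : MvPolynomial (Fin (n + 1)) k →ₗ[MvPolynomial (Fin (n + 1)) k]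
          (Fin (m + 1) → ↥I))
      (β : (Fin (m + 1) → ↥I) →ₗ[MvPolynomial (Fin (n + 1)) k] (Fin m → ↥I))
      (γ : (Fin m → ↥I) →ₗ[MvPolynomial (Fin (n + 1)) k]
          (↥I →ₗ[MvPolynomial (Fin (n + 1)) k]
            (MvPolynomial (Fin (n + 1)) k ⧸ I))),
      Function.Injective α ∧ Function.Exact α β ∧ Function.Exact β γ ∧
        Function.Surjective γ := by
  have hd : d1 = Fintype.linearCombination _ v1 := by
    rw [hd1]
    ext w
    simp [Fintype.linearCombination_apply]
  subst hd
  have hI : Ideal.span (Set.range v1) = I := by simpa using hrange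
  have hI2 : 2 ≤ I.height := by rw [← idealCodim_eq_height, hcodim]
  have hI0 : I ≠ ⊥ := by
    rintro rfl
    simp [Ideal.height_bot] at hI2
  exact ⟨generatorsMap hI, transposeMap M2 I, connectingMap hex hinj hI hI2,
    generatorsMap_injective hI hI0, exact_generatorsMap_transposeMap hex hI hI2,
    exact_transposeMap_connectingMap hex hinj hI hI2, connectingMap_surjective hex hinj hI hI2⟩
end
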